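/- Let (G,·,▷,Φ) be a twisted post group with sub-adjacent operation ∘, identity 1 of (G,·), and G_1 = {b∘e_1 | b∈G} where e_1 = (L_1^▷)^{-1}(Φ(1)^{-1}·1). Then Φ(G) = G_1; in particular the image of Φ is a group under ∘. -/

import Mathlib

/-- A (left) twisted post group: a group `G` with a binary operation `tri` (written `▷`)
and a cocycle `phi` such that each left multiplication `tri a` is a group automorphism,
`(a ∘ b) ▷ c = a ▷ (b ▷ c)` and `Φ(a ∘ b) = a ∘ Φ(b)`, where `a ∘ b = Φ(a)·(a ▷ b)`. -/
structure TPG (G : Type*) [Group G] where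
  tri : G → G → G
  phi : G → G
  tri_mul : ∀ a b c : G, tri a (b * c) = tri a b * tri a c
  tri_bij : ∀ a : G, Function.Bijective (tri a)
  tri_assoc : ∀ a b c : G, tri (phi a * tri a b) c = tri a (tri b c)
  phi_comp : ∀ a b : G, phi (phi a * tri a b) = phi a * tri a (phi b)

namespace TPG

variable {G : Type*} [Group G] (T : TPG G)

/-- The sub-adjacent operation `a ∘ b = Φ(a)·(a ▷ b)`. -/
def circ (a b : G) : G := T.phi a * T.tri a b

/-- `e_a = (L_a^▷)⁻¹(Φ(a)⁻¹·a)`. -/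
noncomputable def e (a : G) : G := Function.invFun (T.tri a) ((T.phi a)⁻¹ * a)

/-- `a† = (L_a^▷)⁻¹(Φ(a)⁻¹·e_a)`. -/
noncomputable def dag (a : G) : G := Function.invFun (T.tri a) ((T.phi a)⁻¹ * T.e a)

end TPG

/-!
The sub-adjacent operation `∘` is associative and left cancellative, `e_a` is a right identity
for `a` and, by cancelling `a` in `a ∘ (e_a ∘ b) = a ∘ b`, a left identity for everything.
Since `Φ(a) = a ∘ 1` and `Φ(a ∘ b) = a ∘ Φ(b)`, the range of `Φ` is a left ideal for `∘`;
it contains `e_1 = Φ(1†)`, and `e_1` is a right identity on it, so `Φ(G) = G ∘ e_1`.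
-/

namespace TPG

variable {G : Type*} [Group G] (T : TPG G)

lemma tri_e (a : G) : T.tri a (T.e a) = (T.phi a)⁻¹ * a :=
  Function.rightInverse_invFun (T.tri_bij a).2 _

lemma tri_dag (a : G) : T.tri a (T.dag a) = (T.phi a)⁻¹ * T.e a :=
  Function.rightInverse_invFun (T.tri_bij a).2 _

lemma tri_one (a : G) : T.tri a 1 = 1 :=
  left_eq_mul.mp (by rw [← T.tri_mul, mul_one] : T.tri a 1 = T.tri a 1 * T.tri a 1)

lemma circ_e (a : G) : T.circ a (T.e a) = a := by
  simp [circ, tri_e]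

lemma circ_dag (a : G) : T.circ a (T.dag a) = T.e a := by
  simp [circ, tri_dag]

lemma circ_injective (a : G) : Function.Injective (T.circ a) := fun _ _ h =>
  (T.tri_bij a).1 (mul_left_cancel h)

lemma circ_assoc (a b c : G) : T.circ (T.circ a b) c = T.circ a (T.circ b c) := by
  simp only [circ]
  rw [T.phi_comp, T.tri_assoc, T.tri_mul, mul_assoc]

lemma e_circ (a b : G) : T.circ (T.e a) b = b :=
  T.circ_injective a (by rw [← circ_assoc, circ_e])

lemma phi_eq_circ_one (a : G) : T.phi a = T.circ a 1 := by
  simp [circ, tri_one]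

lemma phi_circ (a b : G) : T.phi (T.circ a b) = T.circ a (T.phi b) :=
  T.phi_comp a b

lemma phi_dag_one : T.phi (T.dag 1) = T.e 1 :=
  T.circ_injective 1 (by rw [← phi_circ, circ_dag, phi_eq_circ_one, e_circ, circ_e])

lemma e_one_mem_range_phi : T.e 1 ∈ Set.range T.phi :=
  ⟨T.dag 1, T.phi_dag_one⟩

lemma circ_mem_range_phi (a : G) {x : G} (hx : x ∈ Set.range T.phi) :
    T.circ a x ∈ Set.range T.phi := by
  obtain ⟨b, rfl⟩ := hx
  exact ⟨T.circ a b, T.phi_circ a b⟩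

lemma circ_e_one_of_mem_range_phi {x : G} (hx : x ∈ Set.range T.phi) : T.circ x (T.e 1) = x := by
  obtain ⟨b, rfl⟩ := hx
  rw [T.phi_eq_circ_one, T.circ_assoc, T.circ_e]

lemma e_eq_e_one_of_mem_range_phi {x : G} (hx : x ∈ Set.range T.phi) : T.e x = T.e 1 :=
  T.circ_injective x (by rw [T.circ_e, T.circ_e_one_of_mem_range_phi hx])

lemma circ_dag_of_mem_range_phi {x : G} (hx : x ∈ Set.range T.phi) : T.circ x (T.dag x) = T.e 1 := by
  rw [T.circ_dag, T.e_eq_e_one_of_mem_range_phi hx]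

lemma dag_circ_of_mem_range_phi {x : G} (hx : x ∈ Set.range T.phi) : T.circ (T.dag x) x = T.e 1 :=
  T.circ_injective x (by
    rw [← T.circ_assoc, T.circ_dag_of_mem_range_phi hx, T.e_circ, T.circ_e_one_of_mem_range_phi hx])

lemma dag_mem_range_phi {x : G} (hx : x ∈ Set.range T.phi) : T.dag x ∈ Set.range T.phi := by
  have hdag : T.circ (T.dag x) (T.e 1) = T.dag x :=
    T.circ_injective x (by rw [← T.circ_assoc, T.circ_dag_of_mem_range_phi hx, T.e_circ])
  exact hdag ▸ T.circ_mem_range_phi _ T.e_one_mem_range_phi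

lemma range_phi_eq_range_circ_e_one :
    Set.range T.phi = {x : G | ∃ b : G, x = T.circ b (T.e 1)} := by
  ext x
  refine ⟨fun hx => ⟨x, (T.circ_e_one_of_mem_range_phi hx).symm⟩, ?_⟩
  rintro ⟨b, rfl⟩
  exact T.circ_mem_range_phi b T.e_one_mem_range_phi

end TPG

/-- `Φ(G) = G_1`, and the image of `Φ` is a group under `∘` with identity `e_1`,
in which the inverse of `x` is `x†`. -/
theorem phi_range_eq_G1 {G : Type*} [Group G] (T : TPG G) :
    Set.range T.phi = {x : G | ∃ b : G, x = T.circ b (T.e 1)} ∧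
    T.e 1 ∈ Set.range T.phi ∧
    (∀ x ∈ Set.range T.phi, T.circ x (T.e 1) = x ∧ T.circ (T.e 1) x = x) ∧
    (∀ x ∈ Set.range T.phi, T.dag x ∈ Set.range T.phi ∧
      T.circ x (T.dag x) = T.e 1 ∧ T.circ (T.dag x) x = T.e 1) :=
  ⟨T.range_phi_eq_range_circ_e_one, T.e_one_mem_range_phi,
    fun _ hx => ⟨T.circ_e_one_of_mem_range_phi hx, T.e_circ 1 _⟩,
    fun _ hx => ⟨T.dag_mem_range_phi hx, T.circ_dag_of_mem_range_phi hx, T.dag_circ_of_mem_range_phi hx⟩⟩
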